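/- arXiv:1911.04786 — 2 statements merged into one kernel-verified Lean document; each statement's English description precedes it below -/
import Mathlib

section
/- Let ξ ≥ 0. For N ∈ ℕ let σ_N be the sum of the N largest values (with multiplicity) of the doubly-indexed family μ_{(n,m)} := (n+m+2+2ξ)^{-2}, (n,m) ∈ ℕ² (the value (j+2+2ξ)^{-2} occurring with multiplicity j+1). Then (log N)^{-1} σ_N converges to 1/2 as N → ∞. -/
/-!
Since `x ↦ (x + 2 + 2ξ)⁻²` is strictly decreasing, a nonincreasing arrangement `β` lists the
shells `n + m = j` in increasing order of `j`. The shells below `j` hold `j(j+1)/2` points, so the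
`k`-th term lies in a shell `j` with `|j - √(2k)| ≤ 2`, whence `(k+1) μ_{β(k)} → 1/2`. Comparing with
the harmonic series, `∑_{k<N} (k+1)⁻¹ ~ log N`, gives the limit.
-/

open Finset Filter Real Asymptotics Topology

theorem isEquivalent_sum_range_inv_succ_log :
    (fun N : ℕ => ∑ k ∈ range N, ((k : ℝ) + 1)⁻¹) ~[atTop] fun N => log N := by
  have hharmonic : ∀ N : ℕ, ∑ k ∈ range N, ((k : ℝ) + 1)⁻¹ = harmonic N := by
    intro N
    simp [harmonic]
  refine IsLittleO.isEquivalent ?_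
  simp only [hharmonic]
  exact (tendsto_harmonic_sub_log.isBigO_one ℝ).trans_isLittleO
    ((isLittleO_one_left_iff ℝ).2
      (tendsto_norm_atTop_atTop.comp (tendsto_log_atTop.comp tendsto_natCast_atTop_atTop)))

theorem tendsto_inv_log_mul_sum_of_tendsto_succ_mul {a : ℕ → ℝ} {L : ℝ}
    (h : Tendsto (fun k : ℕ => ((k : ℝ) + 1) * a k) atTop (𝓝 L)) :
    Tendsto (fun N : ℕ => (log N)⁻¹ * ∑ k ∈ range N, a k) atTop (𝓝 L) := by
  have hlog_tendsto : Tendsto (fun N : ℕ => log N) atTop atTop :=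
    tendsto_log_atTop.comp tendsto_natCast_atTop_atTop
  have hharmonic := isEquivalent_sum_range_inv_succ_log
  have hratio : Tendsto (fun N : ℕ => (∑ k ∈ range N, ((k : ℝ) + 1)⁻¹) / log N) atTop (𝓝 1) :=
    (isEquivalent_iff_tendsto_one (hlog_tendsto.eventually_ne_atTop 0)).1 hharmonic
  have herr : (fun k : ℕ => a k - L * ((k : ℝ) + 1)⁻¹) =o[atTop] fun k => ((k : ℝ) + 1)⁻¹ := by
    rw [isLittleO_iff_tendsto fun k hk => absurd hk (by positivity)]
    refine (sub_self L ▸ h.sub_const L).congr fun k => ?_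
    field_simp
  have hsum_err := (herr.sum_range (fun k => by positivity)
    (hharmonic.symm.tendsto_atTop hlog_tendsto)).trans_isEquivalent hharmonic
  have hlim := (hratio.const_mul L).add hsum_err.tendsto_div_nhds_zero
  rw [mul_one, add_zero] at hlim
  refine hlim.congr fun N => ?_
  rw [sum_sub_distrib, ← mul_sum]
  ring

theorem tendsto_succ_mul_inv_sq_of_abs_sub_sqrt_le {x : ℕ → ℝ} {d : ℝ}
    (h : ∀ k, |x k - √(2 * k)| ≤ d) :
    Tendsto (fun k : ℕ => ((k : ℝ) + 1) * (x k ^ 2)⁻¹) atTop (𝓝 (1 / 2)) := by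
  have hsqrt : Tendsto (fun k : ℕ => √(2 * (k : ℝ))) atTop atTop :=
    tendsto_sqrt_atTop.comp (tendsto_natCast_atTop_atTop.const_mul_atTop two_pos)
  have hx : x ~[atTop] fun k => √(2 * k) := by
    refine IsLittleO.isEquivalent ?_
    have hbounded : (fun k : ℕ => x k - √(2 * k)) =O[atTop] fun _ => (1 : ℝ) :=
      IsBigO.of_bound d (Eventually.of_forall fun k => by simpa using h k)
    exact hbounded.trans_isLittleO
      ((isLittleO_one_left_iff ℝ).2 (tendsto_norm_atTop_atTop.comp hsqrt))
  have hsucc : (fun k : ℕ => (k : ℝ) + 1) ~[atTop] fun k => (k : ℝ) :=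
    IsEquivalent.refl.add_const_of_norm_tendsto_atTop
      (tendsto_norm_atTop_atTop.comp tendsto_natCast_atTop_atTop)
  refine (hsucc.mul (hx.pow 2).inv).symm.tendsto_nhds (tendsto_const_nhds.congr' ?_)
  filter_upwards [eventually_ne_atTop 0] with k hk
  rw [Pi.mul_apply, Pi.inv_apply, Pi.pow_apply, sq_sqrt (by positivity)]
  field_simp

theorem Monotone.lt_iff_lt_card {α : Type*} [Preorder α] {f : ℕ → α} (hf : Monotone f) {j : α}
    {s : Finset ℕ} (hs : ∀ k, k ∈ s ↔ f k < j) (k : ℕ) : f k < j ↔ k < #s := by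
  rw [← hs]
  constructor
  · intro hk
    have hsub : range (k + 1) ⊆ s := fun i hi =>
      (hs i).2 ((hf (Nat.lt_succ_iff.1 (mem_range.1 hi))).trans_lt ((hs k).1 hk))
    simpa using card_le_card hsub
  · intro hk
    by_contra hk'
    have hsub : s ⊆ range k := fun i hi => mem_range.2 <| lt_of_not_ge fun hki =>
      hk' ((hs k).2 ((hf hki).trans_lt ((hs i).1 hi)))
    simpa using hk.trans_le (card_le_card hsub)

def lowerTriangle (j : ℕ) : Finset (ℕ × ℕ) :=
  (range j).biUnion antidiagonal

theorem mem_lowerTriangle {j : ℕ} {p : ℕ × ℕ} : p ∈ lowerTriangle j ↔ p.1 + p.2 < j := by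
  simp [lowerTriangle]

theorem two_mul_card_lowerTriangle (j : ℕ) : 2 * #(lowerTriangle j) = j * (j + 1) := by
  rw [lowerTriangle, card_biUnion fun i _ i' _ hii' => disjoint_left.2 fun p hp hp' =>
    hii' ((mem_antidiagonal.1 hp).symm.trans (mem_antidiagonal.1 hp'))]
  induction j with
  | zero => rfl
  | succ j ih =>
    rw [sum_range_succ, mul_add, ih, Nat.card_antidiagonal]
    ring

theorem add_lt_iff_two_mul_lt_of_monotone {β : ℕ ≃ ℕ × ℕ}
    (hβ : Monotone fun k => (β k).1 + (β k).2) (j k : ℕ) :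
    (β k).1 + (β k).2 < j ↔ 2 * k < j * (j + 1) := by
  rw [hβ.lt_iff_lt_card (s := (lowerTriangle j).map β.symm.toEmbedding)
    fun k => by simp [mem_map_equiv, mem_lowerTriangle], card_map,
    ← two_mul_card_lowerTriangle]
  omega

theorem abs_sub_sqrt_le_of_sq_le_of_le_sq {x y d : ℝ} (hx : 0 ≤ x) (hd : 0 ≤ d)
    (hlow : x ^ 2 ≤ y) (hupp : y ≤ (x + d) ^ 2) : |x - √y| ≤ d := by
  have h1 : x ≤ √y := (le_sqrt hx ((sq_nonneg x).trans hlow)).2 hlow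
  have h2 : √y ≤ x + d := (sqrt_le_left (add_nonneg hx hd)).2 hupp
  rw [abs_sub_le_iff]
  constructor <;> linarith

theorem abs_add_sub_sqrt_le_of_monotone {β : ℕ ≃ ℕ × ℕ}
    (hβ : Monotone fun k => (β k).1 + (β k).2) (k : ℕ) :
    |((β k).1 + (β k).2 : ℝ) - √(2 * k)| ≤ 2 := by
  set n := (β k).1 + (β k).2 with hn
  have hlow : n * (n + 1) ≤ 2 * k :=
    not_lt.1 fun h => (lt_irrefl n) ((add_lt_iff_two_mul_lt_of_monotone hβ n k).2 h)
  have hupp : 2 * k < (n + 1) * (n + 1 + 1) :=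
    (add_lt_iff_two_mul_lt_of_monotone hβ (n + 1) k).1 (Nat.lt_succ_self n)
  have hlowR : (n : ℝ) * (n + 1) ≤ 2 * k := by exact_mod_cast hlow
  have huppR : 2 * (k : ℝ) < (n + 1) * (n + 2) := by exact_mod_cast hupp
  have := abs_sub_sqrt_le_of_sq_le_of_le_sq (x := (n : ℝ)) (y := 2 * k) (d := 2)
    (by positivity) (by norm_num) (by nlinarith) (by nlinarith)
  simpa [hn] using this

/-- Dixmier-regularized sums of the eigenvalues `(n+m+2+2ξ)⁻²` of the squared resolvent of
the 2D harmonic oscillator: for any enumeration `β : ℕ ≃ ℕ × ℕ` arranging the family in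
nonincreasing order, `(log N)⁻¹ ∑_{k<N} μ_{β(k)} → 1/2`. -/
theorem stmt11 (ξ : ℝ) (hξ : 0 ≤ ξ) (β : ℕ ≃ ℕ × ℕ)
    (hmono : Antitone fun k : ℕ =>
      (((β k).1 : ℝ) + ((β k).2 : ℝ) + 2 + 2 * ξ) ^ (-2 : ℝ)) :
    Filter.Tendsto
      (fun N : ℕ => (Real.log N)⁻¹ *
        ∑ k ∈ Finset.range N, (((β k).1 : ℝ) + ((β k).2 : ℝ) + 2 + 2 * ξ) ^ (-2 : ℝ))
      Filter.atTop (nhds (1 / 2)) := by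
  have hc : (0 : ℝ) < 2 + 2 * ξ := by positivity
  have hdecay : StrictAnti fun n : ℕ => ((n : ℝ) + (2 + 2 * ξ)) ^ (-2 : ℝ) :=
    fun m n hmn => rpow_lt_rpow_of_neg (by positivity) (by gcongr) (by norm_num)
  have hβ : Monotone fun k => (β k).1 + (β k).2 := fun k l hkl =>
    hdecay.le_iff_ge.1 (by simpa [add_assoc] using hmono hkl)
  have hsqrt (k : ℕ) : |((β k).1 + (β k).2 + 2 + 2 * ξ : ℝ) - √(2 * k)| ≤ 2 + (2 + 2 * ξ) := by
    have := abs_add_sub_sqrt_le_of_monotone hβ k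
    rw [abs_le] at this ⊢
    constructor <;> linarith
  refine (tendsto_inv_log_mul_sum_of_tendsto_succ_mul
    (tendsto_succ_mul_inv_sq_of_abs_sub_sqrt_le hsqrt)).congr fun N => ?_
  congr 1
  refine sum_congr rfl fun k _ => ?_
  rw [rpow_neg (by positivity), rpow_two]
end

section
/- Let (μ_n)_{n≥0} be a nonincreasing sequence of nonnegative reals with multiplicities m_n ∈ ℕ such that m_n · μ_n ~ C/n as n → ∞ for some constant C > 0, and suppose α := lim_{N→∞} log(N) / log(∑_{n=0}^{N-1} m_n) exists. Then the regularized sums (log M)^{-1} ∑ (first M terms of the sequence counted with multiplicity) converge to α·C as M → ∞. -/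
/-!
Write `S N = ∑_{n<N} m n` and `A N = ∑_{n<N} m n * μ n`, so that `ν` equals `μ N` on the block
`[S N, S (N + 1))` and its partial sum up to `S N` is `A N`. Comparing with the harmonic series,
`n * m n * μ n → C` gives `A N ~ C log N`, and `log N ~ α log (S N)` then gives
`A N / log (S N) → α C`. For `M` in the `N`-th block the partial sum up to `M` lies between `A N`
and `A (N + 1)` because `μ ≥ 0`, while `log M` lies between `log (S N)` and `log (S (N + 1))`;
both index shifts are absorbed by `log (N + 1) / log N → 1`.
-/

open Filter Finset Real Asymptotics Topology

lemma Filter.Tendsto.div_mul_div_of_ne_zero {ι : Type*} {l : Filter ι} {x y z : ι → ℝ} {a b : ℝ}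
    (hxy : Tendsto (fun i => x i / y i) l (𝓝 a)) (hyz : Tendsto (fun i => y i / z i) l (𝓝 b))
    (hy : ∀ᶠ i in l, y i ≠ 0) : Tendsto (fun i => x i / z i) l (𝓝 (a * b)) :=
  (hxy.mul hyz).congr' (hy.mono fun _ h => div_mul_div_cancel₀ h)

lemma tendsto_log_natCast : Tendsto (fun N : ℕ => log N) atTop atTop :=
  tendsto_log_atTop.comp tendsto_natCast_atTop_atTop

lemma tendsto_log_succ_div_log :
    Tendsto (fun N : ℕ => log ↑(N + 1) / log N) atTop (𝓝 1) := by
  have h := (tendsto_log_nat_add_one_sub_log.div_atTop tendsto_log_natCast).add_const 1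
  rw [zero_add] at h
  refine h.congr' ?_
  filter_upwards [eventually_ge_atTop 2] with N hN
  have : log N ≠ 0 := (log_pos (by exact_mod_cast hN)).ne'
  push_cast
  field_simp
  ring

lemma tendsto_harmonic_div_log :
    Tendsto (fun N : ℕ => (harmonic N : ℝ) / log N) atTop (𝓝 1) := by
  have h := (tendsto_harmonic_sub_log.div_atTop tendsto_log_natCast).add_const 1
  rw [zero_add] at h
  refine h.congr' ?_
  filter_upwards [eventually_ge_atTop 2] with N hN
  have : log N ≠ 0 := (log_pos (by exact_mod_cast hN)).ne'
  field_simp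
  ring

lemma tendsto_sum_range_div_log_of_tendsto_mul {a : ℕ → ℝ} {C : ℝ}
    (h : Tendsto (fun n : ℕ => n * a n) atTop (𝓝 C)) :
    Tendsto (fun N : ℕ => (∑ n ∈ range N, a n) / log N) atTop (𝓝 C) := by
  set w : ℕ → ℝ := fun n => (↑(n + 1))⁻¹
  have hharm : ∀ N, ∑ n ∈ range N, w n = harmonic N := by simp [w, harmonic]
  have ha : Tendsto a atTop (𝓝 0) :=
    (h.div_atTop tendsto_natCast_atTop_atTop).congr' <| by
      filter_upwards [eventually_ne_atTop 0] with n hn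
      field_simp
  have hlo : (fun n => a n - C * w n) =o[atTop] w := by
    rw [isLittleO_iff_tendsto' (.of_forall fun n hn => absurd hn (by positivity))]
    have h' := (h.add ha).sub_const C
    rw [add_zero, sub_self] at h'
    refine h'.congr fun n => ?_
    simp only [w]
    push_cast
    field_simp
  have hw : Tendsto (fun N => ∑ n ∈ range N, w n) atTop atTop := by
    simpa only [hharm, sub_add_cancel] using
      tendsto_harmonic_sub_log.add_atTop tendsto_log_natCast
  have hsum := (hlo.sum_range (fun n => by positivity) hw).tendsto_div_nhds_zero
  have h' := (hsum.add_const C).mul tendsto_harmonic_div_log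
  rw [zero_add, mul_one] at h'
  refine h'.congr' ?_
  filter_upwards [eventually_ne_atTop 0] with N hN
  have hH : (harmonic N : ℝ) ≠ 0 := by exact_mod_cast (harmonic_pos hN).ne'
  rw [sum_sub_distrib, ← mul_sum, hharm]
  field_simp
  ring

lemma exists_le_lt_succ_of_tendsto_atTop {S : ℕ → ℕ} (hS : Tendsto S atTop atTop) {N₀ M : ℕ}
    (hM : S N₀ ≤ M) : ∃ N ≥ N₀, S N ≤ M ∧ M < S (N + 1) := by
  by_contra! h
  have hle : ∀ N ≥ N₀, S N ≤ M := fun N hN => Nat.le_induction hM (fun N hN => h N hN) N hN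
  obtain ⟨N, hN⟩ := ((hS.eventually_gt_atTop M).and (eventually_ge_atTop N₀)).exists
  exact (hle N hN.2).not_gt hN.1

theorem Filter.Tendsto.of_forall_Ico_bounds {α : Type*} [TopologicalSpace α] [LinearOrder α]
    [OrderTopology α] {S : ℕ → ℕ} (hS : Tendsto S atTop atTop) {u lo hi : ℕ → α} {L : α}
    (hlo : Tendsto lo atTop (𝓝 L)) (hhi : Tendsto hi atTop (𝓝 L))
    (hbound : ∀ᶠ N in atTop, ∀ M, S N ≤ M → M < S (N + 1) → lo N ≤ u M ∧ u M ≤ hi N) :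
    Tendsto u atTop (𝓝 L) := by
  rw [tendsto_order] at hlo hhi ⊢
  constructor
  · intro a ha
    obtain ⟨N₀, hN₀⟩ := eventually_atTop.1 ((hlo.1 a ha).and hbound)
    filter_upwards [eventually_ge_atTop (S N₀)] with M hM
    obtain ⟨N, hN, h₁, h₂⟩ := exists_le_lt_succ_of_tendsto_atTop hS hM
    exact (hN₀ N hN).1.trans_le ((hN₀ N hN).2 M h₁ h₂).1
  · intro a ha
    obtain ⟨N₀, hN₀⟩ := eventually_atTop.1 ((hhi.2 a ha).and hbound)
    filter_upwards [eventually_ge_atTop (S N₀)] with M hM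
    obtain ⟨N, hN, h₁, h₂⟩ := exists_le_lt_succ_of_tendsto_atTop hS hM
    exact ((hN₀ N hN).2 M h₁ h₂).2.trans_lt (hN₀ N hN).1

lemma tendsto_sum_range_atTop_of_eventually_pos {m : ℕ → ℕ} (hm : ∀ᶠ n in atTop, 0 < m n) :
    Tendsto (fun N => ∑ i ∈ range N, m i) atTop atTop := by
  obtain ⟨n₀, hn₀⟩ := eventually_atTop.1 hm
  have hge : ∀ N ≥ n₀, N - n₀ ≤ ∑ i ∈ range N, m i := by
    refine fun N hN => Nat.le_induction (by simp) (fun N hN ih => ?_) N hN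
    rw [sum_range_succ]
    have := hn₀ N hN
    omega
  refine tendsto_atTop_mono' atTop ?_ (tendsto_sub_atTop_nat n₀)
  filter_upwards [eventually_ge_atTop n₀] using hge

section Blocks

variable {m : ℕ → ℕ} {μ ν : ℕ → ℝ}

lemma sum_Ico_eq_of_block
    (hν : ∀ n k : ℕ, ∑ i ∈ range n, m i ≤ k → k < ∑ i ∈ range (n + 1), m i → ν k = μ n)
    {N M : ℕ} (hM : M ≤ ∑ i ∈ range (N + 1), m i) :
    ∑ k ∈ Ico (∑ i ∈ range N, m i) M, ν k = (M - ∑ i ∈ range N, m i : ℕ) * μ N := by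
  rw [sum_congr rfl fun k hk => hν N k (mem_Ico.1 hk).1 ((mem_Ico.1 hk).2.trans_le hM),
    sum_const, Nat.card_Ico, nsmul_eq_mul]

lemma sum_range_sum_range_eq
    (hν : ∀ n k : ℕ, ∑ i ∈ range n, m i ≤ k → k < ∑ i ∈ range (n + 1), m i → ν k = μ n)
    (N : ℕ) : ∑ k ∈ range (∑ i ∈ range N, m i), ν k = ∑ n ∈ range N, m n * μ n := by
  induction N with
  | zero => simp
  | succ N ih =>
    have hle : ∑ i ∈ range N, m i ≤ ∑ i ∈ range (N + 1), m i :=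
      sum_le_sum_of_subset (range_subset_range.2 N.le_succ)
    rw [← sum_range_add_sum_Ico ν hle, ih, sum_Ico_eq_of_block hν le_rfl, sum_range_succ m N,
      Nat.add_sub_cancel_left, sum_range_succ _ N]

lemma sum_range_mem_Icc_of_block
    (hν : ∀ n k : ℕ, ∑ i ∈ range n, m i ≤ k → k < ∑ i ∈ range (n + 1), m i → ν k = μ n)
    {N M : ℕ} (hμ : 0 ≤ μ N) (hNM : ∑ i ∈ range N, m i ≤ M)
    (hMN : M ≤ ∑ i ∈ range (N + 1), m i) :
    ∑ k ∈ range M, ν k ∈ Set.Icc (∑ n ∈ range N, m n * μ n) (∑ n ∈ range (N + 1), m n * μ n) := by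
  rw [← sum_range_add_sum_Ico ν hNM, sum_range_sum_range_eq hν, sum_Ico_eq_of_block hν hMN,
    sum_range_succ _ N, Set.mem_Icc]
  have hrem : M - ∑ i ∈ range N, m i ≤ m N := by
    rw [sum_range_succ] at hMN
    omega
  exact ⟨le_add_of_nonneg_right (by positivity),
    by gcongr⟩

end Blocks

theorem stmt12_general (μ : ℕ → ℝ) (m : ℕ → ℕ) (C α : ℝ) (hC : 0 < C)
    (hnn : ∀ n, 0 ≤ μ n)
    (hasym : Filter.Tendsto (fun n : ℕ => (n : ℝ) * ((m n : ℝ) * μ n))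
      Filter.atTop (nhds C))
    (hα : Filter.Tendsto
      (fun N : ℕ => Real.log N / Real.log (∑ n ∈ Finset.range N, (m n : ℝ)))
      Filter.atTop (nhds α))
    (ν : ℕ → ℝ)
    (hν : ∀ n k : ℕ, (∑ i ∈ Finset.range n, m i) ≤ k →
      k < ∑ i ∈ Finset.range (n + 1), m i → ν k = μ n) :
    Filter.Tendsto (fun M : ℕ => (Real.log M)⁻¹ * ∑ k ∈ Finset.range M, ν k)
      Filter.atTop (nhds (α * C)) := by
  set S : ℕ → ℕ := fun N => ∑ i ∈ range N, m i
  set A : ℕ → ℝ := fun N => ∑ n ∈ range N, m n * μ n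
  have hS : Tendsto S atTop atTop := tendsto_sum_range_atTop_of_eventually_pos <|
    (hasym.eventually (lt_mem_nhds hC)).mono fun n hn =>
      Nat.pos_of_ne_zero fun h => by simp [h] at hn
  have hA : Tendsto (fun N => A N / log N) atTop (𝓝 C) :=
    tendsto_sum_range_div_log_of_tendsto_mul hasym
  have hα' : Tendsto (fun N : ℕ => log N / log (S N)) atTop (𝓝 α) := by
    simpa only [S, Nat.cast_sum] using hα
  have hlog : ∀ᶠ N : ℕ in atTop, log N ≠ 0 := tendsto_log_natCast.eventually_ne_atTop 0
  have hlog' := tendsto_add_atTop_nat 1 |>.eventually hlog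
  have hlo : Tendsto (fun N => A N / log (S (N + 1))) atTop (𝓝 (α * C)) := by
    have hshift : Tendsto (fun N : ℕ => log N / log ↑(N + 1)) atTop (𝓝 1) := by
      simpa only [inv_div, inv_one] using tendsto_log_succ_div_log.inv₀ one_ne_zero
    simpa only [mul_one, mul_comm C α] using
      (hA.div_mul_div_of_ne_zero hshift hlog).div_mul_div_of_ne_zero
        (hα'.comp (tendsto_add_atTop_nat 1)) hlog'
  have hhi : Tendsto (fun N => A (N + 1) / log (S N)) atTop (𝓝 (α * C)) := by
    simpa only [mul_one, mul_comm C α] using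
      ((hA.comp (tendsto_add_atTop_nat 1)).div_mul_div_of_ne_zero tendsto_log_succ_div_log
        hlog').div_mul_div_of_ne_zero hα' hlog
  refine hS.of_forall_Ico_bounds hlo hhi ?_
  filter_upwards [hS.eventually_ge_atTop 2] with N hN M hNM hMN
  obtain ⟨hlower, hupper⟩ := sum_range_mem_Icc_of_block hν (hnn N) hNM hMN.le
  have hA0 : 0 ≤ A N := sum_nonneg fun n _ => mul_nonneg (m n).cast_nonneg (hnn n)
  have hS1 : (1 : ℝ) < S N := by exact_mod_cast hN
  have hM1 : (1 : ℝ) < M := hS1.trans_le (by exact_mod_cast hNM)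
  rw [inv_mul_eq_div]
  exact ⟨div_le_div₀ (hA0.trans hlower) hlower (log_pos hM1)
      (log_le_log (by positivity) (by exact_mod_cast hMN.le)),
    div_le_div₀ (hA0.trans (hlower.trans hupper)) hupper (log_pos hS1)
      (log_le_log (by positivity) (by exact_mod_cast hNM))⟩

/-- Measurability criterion (Alberti–Matthes): if `(μ_n)` is nonincreasing and nonnegative
with multiplicities `m_n` such that `n · m_n μ_n → C > 0` and
`α = lim log N / log(∑_{n<N} m_n)` exists, then the logarithmically regularized partial sums
of the sequence `ν` obtained by repeating `μ_n` with multiplicity `m_n` converge to `α·C`. -/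
theorem stmt12 (μ : ℕ → ℝ) (m : ℕ → ℕ) (C α : ℝ) (hC : 0 < C)
    (hnn : ∀ n, 0 ≤ μ n) (hanti : Antitone μ)
    (hasym : Filter.Tendsto (fun n : ℕ => (n : ℝ) * ((m n : ℝ) * μ n))
      Filter.atTop (nhds C))
    (hα : Filter.Tendsto
      (fun N : ℕ => Real.log N / Real.log (∑ n ∈ Finset.range N, (m n : ℝ)))
      Filter.atTop (nhds α))
    (ν : ℕ → ℝ)
    (hν : ∀ n k : ℕ, (∑ i ∈ Finset.range n, m i) ≤ k →
      k < ∑ i ∈ Finset.range (n + 1), m i → ν k = μ n) :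
    Filter.Tendsto (fun M : ℕ => (Real.log M)⁻¹ * ∑ k ∈ Finset.range M, ν k)
      Filter.atTop (nhds (α * C)) :=
  stmt12_general μ m C α hC hnn hasym hα ν hν
end
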